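/- Let L ⊆ Σ* be a prefix-closed regular language and h : Σ → Σ' ∪ {ε} an alphabetic homomorphism, extended to finite and infinite words (where h(x) for an ω-word x is defined only if h applied to the prefixes of x yields words of unbounded length). Then lim(h(L)) = h(lim(L)). -/

import Mathlib

/-!
The inclusion `h(lim L) ⊆ lim h(L)` only uses prefix closure: every prefix of `x` lies in `L`,
and the images of these prefixes are arbitrarily long prefixes of `h(x)`.

Conversely, let `y ∈ lim h(L)` and call `w` extendable if it has extensions in `L` whose images
are arbitrarily long prefixes of `y`; the empty word is extendable. An extendable `w` has
extensions `w p_N`, each adding exactly the letter `y_{|h(w)|}` to the image and each continuing to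
an extension in `L` with image of length at least `N`. As `L` has finitely many left quotients,
one quotient `(w p_{N₀})⁻¹L` equals `(w p_N)⁻¹L` for infinitely many `N`, so `w p_{N₀}` is again
extendable. Iterating from the empty word yields a chain of words of `L` whose limit `x` lies in
`lim L` with `h(x) = y`: finiteness of the quotients replaces finite branching in König's lemma.
-/

/-- The length-`n` prefix of an ω-word. -/
def ωtake {α : Type*} (x : ℕ → α) (n : ℕ) : List α := List.ofFn (fun i : Fin n => x i)

/-- Concatenation of a finite word with an ω-word. -/
def ωcat {α : Type*} (w : List α) (x : ℕ → α) : ℕ → α :=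
  fun n => if h : n < w.length then w.get ⟨n, h⟩ else x (n - w.length)

/-- The set of finite prefixes of ω-words in `L`. -/
def Pre {α : Type*} (L : Set (ℕ → α)) : Set (List α) := {w | ∃ x ∈ L, ∃ n, w = ωtake x n}

/-- Eilenberg limit: ω-words with infinitely many prefixes in `M`. -/
def Lim {α : Type*} (M : Set (List α)) : Set (ℕ → α) := {x | {n | ωtake x n ∈ M}.Infinite}

/-- `P` is a relative liveness property of `L`. -/
def RelLive {α : Type*} (P L : Set (ℕ → α)) : Prop :=
  ∀ w ∈ Pre L, ∃ x : ℕ → α, ωcat w x ∈ L ∧ ωcat w x ∈ P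

/-- `P` is a relative safety property of `L`. -/
def RelSafe {α : Type*} (P L : Set (ℕ → α)) : Prop :=
  ∀ x ∈ L, x ∉ P → ∃ n : ℕ, ∀ z : ℕ → α, ωcat (ωtake x n) z ∈ L → ωcat (ωtake x n) z ∉ P


/-- Letterwise extension of an alphabetic homomorphism (none plays the role of the empty word). -/
def hword {α β : Type*} (h : α → Option β) (w : List α) : List β := w.filterMap h

/-- w is a prefix of the ω-word y. -/
def IsωPrefix {β : Type*} (w : List β) (y : ℕ → β) : Prop := w = ωtake y w.length

/-- y is the image of the ω-word x under the abstraction homomorphism h: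
all images of prefixes of x are prefixes of y and their lengths are unbounded
(i.e. h(x) is defined and equals y). -/
def ωMapsTo {α β : Type*} (h : α → Option β) (x : ℕ → α) (y : ℕ → β) : Prop :=
  (∀ m : ℕ, IsωPrefix (hword h (ωtake x m)) y) ∧
  ∀ N : ℕ, ∃ m : ℕ, N ≤ (hword h (ωtake x m)).length

/-- A finite-word language is prefix-closed. -/
def PrefixClosed {α : Type*} (M : Set (List α)) : Prop :=
  ∀ u v : List α, u <+: v → v ∈ M → u ∈ M

section OmegaWords
variable {α : Type*}

lemma ωtake_length (x : ℕ → α) (n : ℕ) : (ωtake x n).length = n := by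
  simp [ωtake]

lemma ωtake_prefix_ωtake (x : ℕ → α) {m n : ℕ} (hmn : m ≤ n) : ωtake x m <+: ωtake x n := by
  rw [List.prefix_iff_eq_take]
  apply List.ext_getElem
  · simp only [List.length_take, ωtake_length]
    omega
  · intro i _ _
    simp [ωtake]

lemma isωPrefix_ωtake (x : ℕ → α) (n : ℕ) : IsωPrefix (ωtake x n) x := by
  rw [IsωPrefix, ωtake_length]

lemma IsωPrefix.ωtake_prefix {w : List α} {x : ℕ → α} (hw : IsωPrefix w x) {m : ℕ}
    (hm : m ≤ w.length) : ωtake x m <+: w := by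
  rw [hw]
  exact ωtake_prefix_ωtake x hm

lemma IsωPrefix.eq_of_length_eq {u w : List α} {x : ℕ → α} (hu : IsωPrefix u x)
    (hw : IsωPrefix w x) (hlen : u.length = w.length) : u = w := by
  rw [hu, hw, hlen]

lemma IsωPrefix.of_prefix {u w : List α} {x : ℕ → α} (hw : IsωPrefix w x) (huw : u <+: w) :
    IsωPrefix u x := by
  have hu : u.length ≤ w.length := huw.length_le
  have hu_pre : u <+: ωtake x u.length :=
    List.prefix_of_prefix_length_le huw (hw.ωtake_prefix hu) (by rw [ωtake_length])
  exact hu_pre.eq_of_length (by rw [ωtake_length])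

lemma mem_Lim_iff {M : Set (List α)} {x : ℕ → α} :
    x ∈ Lim M ↔ ∀ N, ∃ w ∈ M, IsωPrefix w x ∧ N ≤ w.length := by
  rw [Lim, Set.mem_ofPred_eq, Set.infinite_iff_exists_gt]
  constructor
  · intro hx N
    obtain ⟨n, hn, hNn⟩ := hx N
    exact ⟨ωtake x n, hn, isωPrefix_ωtake x n, by rw [ωtake_length]; omega⟩
  · intro hx N
    obtain ⟨w, hwM, hw, hNw⟩ := hx (N + 1)
    exact ⟨w.length, by rwa [Set.mem_ofPred_eq, ← hw], by omega⟩

lemma PrefixClosed.ωtake_mem_of_mem_Lim {L : Set (List α)} (hpc : PrefixClosed L) {x : ℕ → α}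
    (hx : x ∈ Lim L) (m : ℕ) : ωtake x m ∈ L := by
  obtain ⟨w, hwL, hw, hmw⟩ := mem_Lim_iff.mp hx m
  exact hpc _ _ (hw.ωtake_prefix hmw) hwL

lemma exists_isωPrefix_of_chain (W : ℕ → List α) (hchain : ∀ i, W i <+: W (i + 1))
    (hlen : ∀ i, i ≤ (W i).length) : ∃ x : ℕ → α, ∀ i, IsωPrefix (W i) x := by
  have hmono : ∀ i j, i ≤ j → W i <+: W j := fun i j hij => by
    induction j, hij using Nat.le_induction with
    | base => exact List.prefix_refl _
    | succ j _ ih => exact ih.trans (hchain j)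
  refine ⟨fun n => (W (n + 1))[n]'(by have := hlen (n + 1); omega), fun i => ?_⟩
  apply List.ext_getElem (by rw [ωtake_length])
  intro j hj _
  simp only [ωtake, List.getElem_ofFn]
  rcases le_total i (j + 1) with hij | hji
  · exact (hmono i (j + 1) hij).getElem hj
  · exact ((hmono (j + 1) i hji).getElem _).symm

end OmegaWords

lemma Set.Finite.exists_frequently_eq {γ : Type*} {S : Set γ} (hS : S.Finite) {f : ℕ → γ}
    (hf : ∀ n, f n ∈ S) : ∃ n₀, ∃ᶠ n in Filter.atTop, f n = f n₀ := by
  have := hS.to_subtype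
  obtain ⟨q, hq⟩ := Finite.exists_infinite_fiber (fun n => (⟨f n, hf n⟩ : S))
  have hq : (_ ⁻¹' {q}).Infinite := Set.infinite_coe_iff.mp hq
  obtain ⟨n₀, hn₀⟩ := hq.nonempty
  refine ⟨n₀, Nat.frequently_atTop_iff_infinite.mpr (hq.mono fun n hn => ?_)⟩
  exact congrArg Subtype.val (hn.trans hn₀.symm)

def leftQuotients {α : Type*} (L : Set (List α)) : Set (Set (List α)) :=
  {Q | ∃ w : List α, Q = {v | w ++ v ∈ L}}

section Homomorphism
variable {α β : Type*} (h : α → Option β)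

lemma hword_append (u v : List α) : hword h (u ++ v) = hword h u ++ hword h v :=
  List.filterMap_append

lemma length_hword_le (w : List α) : (hword h w).length ≤ w.length :=
  List.length_filterMap_le h w

lemma exists_prefix_length_hword_eq {u : List α} {n : ℕ} (hn : n ≤ (hword h u).length) :
    ∃ p, p <+: u ∧ (hword h p).length = n := by
  induction u generalizing n with
  | nil => exact ⟨[], List.prefix_refl _, by simp_all [hword]⟩
  | cons a u ih =>
    rcases n with _ | n
    · exact ⟨[], List.nil_prefix, rfl⟩
    cases ha : h a with
    | none =>
      obtain ⟨p, hp, hpn⟩ := ih (n := n + 1) (by simpa [hword, ha] using hn)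
      exact ⟨a :: p, (List.prefix_cons_inj a).mpr hp, by simpa [hword, ha] using hpn⟩
    | some b =>
      obtain ⟨p, hp, hpn⟩ := ih (n := n) (by simpa [hword, ha] using hn)
      exact ⟨a :: p, (List.prefix_cons_inj a).mpr hp, by simpa [hword, ha] using hpn⟩

lemma mem_Lim_image_of_ωMapsTo {L : Set (List α)} (hpc : PrefixClosed L) {x : ℕ → α}
    {y : ℕ → β} (hx : x ∈ Lim L) (hxy : ωMapsTo h x y) : y ∈ Lim (hword h '' L) := by
  refine mem_Lim_iff.mpr fun N => ?_
  obtain ⟨m, hm⟩ := hxy.2 N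
  exact ⟨_, ⟨_, hpc.ωtake_mem_of_mem_Lim hx m, rfl⟩, hxy.1 m, hm⟩

def Extendable (L : Set (List α)) (y : ℕ → β) (w : List α) : Prop :=
  ∀ N, ∃ u, w ++ u ∈ L ∧ IsωPrefix (hword h (w ++ u)) y ∧ N ≤ (hword h (w ++ u)).length

variable {h} {L : Set (List α)} {y : ℕ → β}

lemma extendable_nil_of_mem_Lim_image (hy : y ∈ Lim (hword h '' L)) : Extendable h L y [] := by
  intro N
  obtain ⟨_, ⟨u, hu, rfl⟩, hpre, hN⟩ := mem_Lim_iff.mp hy N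
  exact ⟨u, hu, hpre, hN⟩

lemma Extendable.mem (hpc : PrefixClosed L) {w : List α} (hw : Extendable h L y w) : w ∈ L := by
  obtain ⟨u, hu, -⟩ := hw 0
  exact hpc _ _ (List.prefix_append w u) hu

lemma Extendable.isωPrefix {w : List α} (hw : Extendable h L y w) : IsωPrefix (hword h w) y := by
  obtain ⟨u, -, hpre, -⟩ := hw 0
  exact hpre.of_prefix ((List.prefix_append w u).filterMap h)

lemma Extendable.exists_extension
    (hreg : (leftQuotients L).Finite) {w : List α} (hw : Extendable h L y w) :
    ∃ p, Extendable h L y (w ++ p) ∧ (hword h w).length < (hword h (w ++ p)).length := by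
  choose u hu_mem hu_pre hu_len using fun N => hw (N + (hword h w).length + 1)
  have hu_len' : ∀ N, 1 ≤ (hword h (u N)).length := fun N => by
    have := hu_len N
    rw [hword_append, List.length_append] at this
    omega
  choose p hp_pre hp_len using fun N => exists_prefix_length_hword_eq h (hu_len' N)
  have hwp_pre : ∀ N, IsωPrefix (hword h (w ++ p N)) y := fun N =>
    (hu_pre N).of_prefix (((List.prefix_append_right_inj w).mpr (hp_pre N)).filterMap h)
  have hp_img : ∀ N M, hword h (p N) = hword h (p M) := fun N M => by
    have := (hwp_pre N).eq_of_length_eq (hwp_pre M) (by simp [hword_append, hp_len])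
    rw [hword_append, hword_append] at this
    exact List.append_cancel_left this
  -- a left quotient shared by infinitely many `w ++ p N` contains the tails of all their `u N`
  obtain ⟨N₀, hN₀⟩ := hreg.exists_frequently_eq (f := fun N => {v | w ++ p N ++ v ∈ L})
    fun N => ⟨_, rfl⟩
  refine ⟨p N₀, fun M => ?_, by simp [hword_append, hp_len]⟩
  obtain ⟨N, hMN, hq⟩ := hN₀.forall_exists_of_atTop M
  obtain ⟨r, hr⟩ := hp_pre N
  have himg : hword h (w ++ p N₀ ++ r) = hword h (w ++ u N) := by
    simp only [← hr, hword_append, hp_img N₀ N, List.append_assoc]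
  refine ⟨r, ?_, himg ▸ hu_pre N, himg ▸ by have := hu_len N; omega⟩
  have hr_mem : r ∈ {v | w ++ p N ++ v ∈ L} := by
    simpa only [Set.mem_ofPred_eq, List.append_assoc, hr] using hu_mem N
  exact (hq ▸ hr_mem : r ∈ {v | w ++ p N₀ ++ v ∈ L})

lemma exists_chain_extendable (hreg : (leftQuotients L).Finite)
    (h₀ : Extendable h L y []) : ∃ W : ℕ → List α, (∀ i, W i <+: W (i + 1)) ∧
      ∀ i, Extendable h L y (W i) ∧ i ≤ (hword h (W i)).length := by
  choose! next hnext hlt using fun w (hw : Extendable h L y w) => hw.exists_extension hreg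
  let W : ℕ → List α := fun i => (fun w => w ++ next w)^[i] []
  have hW_succ : ∀ i, W (i + 1) = W i ++ next (W i) := fun i => Function.iterate_succ_apply' _ i _
  refine ⟨W, fun i => hW_succ i ▸ List.prefix_append _ _, fun i => ?_⟩
  induction i with
  | zero => exact ⟨h₀, Nat.zero_le _⟩
  | succ i ih =>
    rw [hW_succ]
    exact ⟨hnext _ ih.1, by have := hlt _ ih.1; omega⟩

lemma exists_ωMapsTo_of_mem_Lim_image (hpc : PrefixClosed L) (hreg : (leftQuotients L).Finite)
    (hy : y ∈ Lim (hword h '' L)) : ∃ x ∈ Lim L, ωMapsTo h x y := by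
  obtain ⟨W, hchain, hW⟩ := exists_chain_extendable hreg (extendable_nil_of_mem_Lim_image hy)
  have hlen : ∀ i, i ≤ (W i).length := fun i => (hW i).2.trans (length_hword_le h _)
  obtain ⟨x, hx⟩ := exists_isωPrefix_of_chain W hchain hlen
  refine ⟨x, mem_Lim_iff.mpr fun N => ⟨W N, (hW N).1.mem hpc, hx N, hlen N⟩,
    fun m => ?_, fun N => ⟨(W N).length, ?_⟩⟩
  · exact (hW m).1.isωPrefix.of_prefix (((hx m).ωtake_prefix (hlen m)).filterMap h)
  · rw [← hx N]
    exact (hW N).2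

end Homomorphism

theorem lim_hom_comm {α β : Type*} (h : α → Option β) (L : Set (List α))
    (hpc : PrefixClosed L)
    (hreg : {Q : Set (List α) | ∃ w : List α, Q = {v | w ++ v ∈ L}}.Finite) :
    Lim (hword h '' L) = {y : ℕ → β | ∃ x ∈ Lim L, ωMapsTo h x y} := by
  ext y
  exact ⟨exists_ωMapsTo_of_mem_Lim_image hpc hreg,
    fun ⟨_, hx, hxy⟩ => mem_Lim_image_of_ωMapsTo h hpc hx hxy⟩
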